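/- Let c, μ_0 ∈ ℝ, σ_0 > 0, and for i = 1, …, m let μ_i ∈ ℝ, σ_i > 0. Let X, G_1, …, G_m be jointly independent real random variables on a probability space, with X Gaussian with mean μ_0 and variance σ_0² and each G_i Gaussian with mean μ_i and variance σ_i². Then the constrained expected improvement factorizes: E[ max(0, c − X) · ∏_{i=1}^m 1{G_i ≤ 0} ] = [ (c − μ_0)Φ((c − μ_0)/σ_0) + σ_0 φ((c − μ_0)/σ_0) ] · ∏_{i=1}^m Φ(−μ_i/σ_i), where Φ and φ are the standard normal cumulative distribution function and density. -/

import Mathlib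

/-!
Independence turns the expectation of the product into the product of the expectations of the
factors, each an integral against the law of a single variable. Writing an `N(μ, σ²)` variable as
`σ Z + μ` with `Z` standard normal gives `P(G ≤ 0) = Φ(-μ/σ)` and
`E[max(0, c - X)] = σ E[max(0, z - Z)]` with `z = (c - μ)/σ`; the latter equals `z Φ(z) + φ(z)`
because `x φ(x) = -φ'(x)`.
-/

open MeasureTheory ProbabilityTheory Real

/-- The standard normal cumulative distribution function `Φ`. -/
noncomputable def stdGaussianCDF (x : ℝ) : ℝ := (gaussianReal 0 1 (Set.Iic x)).toReal

/-- The standard normal probability density function `φ`. -/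
noncomputable def stdGaussianPDF (x : ℝ) : ℝ := gaussianPDFReal 0 1 x

open Filter Set

lemma stdGaussianPDF_eq (x : ℝ) : stdGaussianPDF x = (√(2 * π))⁻¹ * rexp (-x ^ 2 / 2) := by
  simp [stdGaussianPDF, gaussianPDFReal]

lemma hasDerivAt_stdGaussianPDF (x : ℝ) :
    HasDerivAt stdGaussianPDF (-x * stdGaussianPDF x) x := by
  rw [stdGaussianPDF_eq, funext stdGaussianPDF_eq]
  refine (((hasDerivAt_pow 2 x).neg.div_const 2).exp.const_mul _).congr_deriv ?_
  simp only [Pi.neg_apply, Nat.cast_ofNat]; ring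

lemma tendsto_stdGaussianPDF_atBot : Tendsto stdGaussianPDF atBot (nhds 0) := by
  have hsq : Tendsto (fun x : ℝ => x ^ 2) atBot atTop := by
    simpa [Function.comp_def] using
      (tendsto_pow_atTop (α := ℝ) two_ne_zero).comp tendsto_neg_atBot_atTop
  have h := (tendsto_exp_atBot.comp
    ((tendsto_neg_atTop_atBot.comp hsq).atBot_div_const two_pos)).const_mul (√(2 * π))⁻¹
  rw [mul_zero] at h
  rw [funext stdGaussianPDF_eq]
  exact h

lemma integrable_mul_stdGaussianPDF : Integrable fun x => x * stdGaussianPDF x := by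
  convert (integrable_mul_exp_neg_mul_sq (b := 1 / 2) (by norm_num)).const_mul (√(2 * π))⁻¹
    using 2 with x
  rw [stdGaussianPDF_eq]; ring_nf

lemma integral_Iic_mul_stdGaussianPDF (z : ℝ) :
    ∫ x in Iic z, x * stdGaussianPDF x = -stdGaussianPDF z := by
  have h := integral_Iic_of_hasDerivAt_of_tendsto' (a := z) (f := fun x => -stdGaussianPDF x)
    (fun x _ => by simpa using (hasDerivAt_stdGaussianPDF x).fun_neg)
    integrable_mul_stdGaussianPDF.integrableOn (by simpa using tendsto_stdGaussianPDF_atBot.neg)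
  simpa using h

lemma stdGaussianCDF_eq_integral (z : ℝ) :
    stdGaussianCDF z = ∫ x in Iic z, stdGaussianPDF x := by
  rw [stdGaussianCDF, gaussianReal_apply_eq_integral 0 one_ne_zero,
    ENNReal.toReal_ofReal (setIntegral_nonneg measurableSet_Iic
      fun x _ => gaussianPDFReal_nonneg 0 1 x)]
  rfl

lemma integral_max_zero_sub_stdGaussian (z : ℝ) :
    ∫ x, max 0 (z - x) ∂gaussianReal 0 1 = z * stdGaussianCDF z + stdGaussianPDF z := by
  have hsplit : ∀ x, stdGaussianPDF x * max 0 (z - x) =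
      (Iic z).indicator (fun x => z * stdGaussianPDF x - x * stdGaussianPDF x) x := by
    intro x
    by_cases hx : x ≤ z
    · simp only [hx, mem_Iic, indicator_of_mem, sub_nonneg, sup_of_le_right]; ring
    · simp [hx, max_eq_left (sub_nonpos.2 (not_le.1 hx).le)]
  have hφ : Integrable stdGaussianPDF := integrable_gaussianPDFReal 0 1
  rw [integral_gaussianReal_eq_integral_smul one_ne_zero]
  change ∫ x, stdGaussianPDF x * max 0 (z - x) = _
  simp_rw [hsplit]
  rw [integral_indicator measurableSet_Iic,
    integral_sub (hφ.const_mul z).restrict integrable_mul_stdGaussianPDF.restrict,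
    integral_const_mul, integral_Iic_mul_stdGaussianPDF, ← stdGaussianCDF_eq_integral]
  ring

lemma gaussianReal_eq_map_stdGaussian (μ σ : ℝ) :
    gaussianReal μ ⟨σ ^ 2, sq_nonneg σ⟩ = (gaussianReal 0 1).map (fun x => σ * x + μ) := by
  change _ = Measure.map ((· + μ) ∘ (σ * ·)) _
  rw [← Measure.map_map (measurable_add_const μ) (measurable_const_mul σ),
    gaussianReal_map_const_mul, gaussianReal_map_add_const]
  congr 1
  · ring
  · rw [mul_one]; rfl

lemma measureReal_gaussianReal_Iic (μ : ℝ) {σ : ℝ} (hσ : 0 < σ) (t : ℝ) :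
    (gaussianReal μ ⟨σ ^ 2, sq_nonneg σ⟩).real (Iic t) = stdGaussianCDF ((t - μ) / σ) := by
  have hpre : (fun x => σ * x + μ) ⁻¹' Iic t = Iic ((t - μ) / σ) := by
    ext x
    rw [mem_preimage, mem_Iic, mem_Iic, le_div_iff₀ hσ]
    constructor <;> intro h <;> linarith
  rw [gaussianReal_eq_map_stdGaussian, map_measureReal_apply (by fun_prop) measurableSet_Iic, hpre]
  rfl

lemma integral_ite_le_gaussianReal (μ : ℝ) {σ : ℝ} (hσ : 0 < σ) (t : ℝ) :
    ∫ x, (if x ≤ t then (1 : ℝ) else 0) ∂gaussianReal μ ⟨σ ^ 2, sq_nonneg σ⟩ =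
      stdGaussianCDF ((t - μ) / σ) := by
  rw [← measureReal_gaussianReal_Iic μ hσ, ← integral_indicator_one measurableSet_Iic]
  rfl

lemma integral_max_zero_sub_gaussianReal (c μ : ℝ) {σ : ℝ} (hσ : 0 < σ) :
    ∫ x, max 0 (c - x) ∂gaussianReal μ ⟨σ ^ 2, sq_nonneg σ⟩ =
      (c - μ) * stdGaussianCDF ((c - μ) / σ) + σ * stdGaussianPDF ((c - μ) / σ) := by
  set z := (c - μ) / σ
  have hσz : σ * z = c - μ := mul_div_cancel₀ _ hσ.ne'
  have hscale : ∀ x, max 0 (c - (σ * x + μ)) = σ * max 0 (z - x) := by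
    intro x
    rw [mul_max_of_nonneg _ _ hσ.le, mul_zero, mul_sub, hσz]
    ring_nf
  rw [gaussianReal_eq_map_stdGaussian, integral_map (by fun_prop) (by fun_prop)]
  simp_rw [hscale]
  rw [integral_const_mul, integral_max_zero_sub_stdGaussian, mul_add, ← mul_assoc, hσz]

lemma aemeasurable_of_map_eq_gaussianReal {Ω : Type*} [MeasurableSpace Ω] {P : Measure Ω}
    {X : Ω → ℝ} {μ : ℝ} {v : NNReal} (h : P.map X = gaussianReal μ v) : AEMeasurable X P :=
  aemeasurable_of_map_neZero (by rw [h]; infer_instance)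

namespace ProbabilityTheory

theorem iIndepFun.integral_fun_prod_comp_eq_prod_integral_map {Ω ι 𝕜 : Type*} [Fintype ι]
    [RCLike 𝕜] {mΩ : MeasurableSpace Ω} {P : Measure Ω} {𝓧 : ι → Type*}
    {m𝓧 : ∀ i, MeasurableSpace (𝓧 i)} {X : (i : ι) → Ω → 𝓧 i} {f : (i : ι) → 𝓧 i → 𝕜}
    (hX : iIndepFun X P) (mX : ∀ i, AEMeasurable (X i) P)
    (hf : ∀ i, AEStronglyMeasurable (f i) (P.map (X i))) :
    ∫ ω, ∏ i, f i (X i ω) ∂P = ∏ i, ∫ x, f i x ∂P.map (X i) := by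
  rw [hX.integral_fun_prod_comp mX hf]
  exact Finset.prod_congr rfl fun i _ => (integral_map (mX i) (hf i)).symm

end ProbabilityTheory

theorem constrained_expected_improvement_closed_form_general
    {Ω : Type*} [MeasurableSpace Ω] (P : Measure Ω)
    (m : ℕ) (c μ₀ σ₀ : ℝ) (hσ₀ : 0 < σ₀) (μ : Fin m → ℝ) (σ : Fin m → ℝ) (hσ : ∀ i, 0 < σ i)
    (X : Ω → ℝ) (G : Fin m → Ω → ℝ)
    (hIndep : iIndepFun (Fin.cons X G : Fin (m + 1) → Ω → ℝ) P)
    (hX : P.map X = gaussianReal μ₀ ⟨σ₀ ^ 2, sq_nonneg σ₀⟩)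
    (hG : ∀ i, P.map (G i) = gaussianReal (μ i) ⟨(σ i) ^ 2, sq_nonneg (σ i)⟩) :
    ∫ ω, max 0 (c - X ω) * ∏ i, (if G i ω ≤ 0 then (1 : ℝ) else 0) ∂P =
      ((c - μ₀) * stdGaussianCDF ((c - μ₀) / σ₀) + σ₀ * stdGaussianPDF ((c - μ₀) / σ₀)) *
        ∏ i, stdGaussianCDF (-(μ i) / σ i) := by
  let f : Fin (m + 1) → ℝ → ℝ :=
    Fin.cons (fun x => max 0 (c - x)) fun _ x => if x ≤ 0 then 1 else 0
  have hmeas : ∀ j, AEMeasurable ((Fin.cons X G : Fin (m + 1) → Ω → ℝ) j) P :=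
    Fin.cases (aemeasurable_of_map_eq_gaussianReal hX)
      fun i => aemeasurable_of_map_eq_gaussianReal (hG i)
  have hf : ∀ j, Measurable (f j) :=
    Fin.cases (by simp only [f, Fin.cons_zero]; fun_prop)
      fun _ => measurable_const.ite measurableSet_Iic measurable_const
  calc ∫ ω, max 0 (c - X ω) * ∏ i, (if G i ω ≤ 0 then (1 : ℝ) else 0) ∂P
      = ∫ ω, ∏ j, f j ((Fin.cons X G : Fin (m + 1) → Ω → ℝ) j ω) ∂P := by
        simp [f, Fin.prod_univ_succ]
    _ = ∏ j, ∫ x, f j x ∂P.map ((Fin.cons X G : Fin (m + 1) → Ω → ℝ) j) :=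
        hIndep.integral_fun_prod_comp_eq_prod_integral_map hmeas
          fun j => (hf j).aestronglyMeasurable
    _ = _ := by
        simp [f, Fin.prod_univ_succ, hX, hG, integral_max_zero_sub_gaussianReal c μ₀ hσ₀,
          integral_ite_le_gaussianReal _ (hσ _)]

/-- Closed form of the constraint-weighted expected improvement: if `X ~ N(μ₀, σ₀²)` and
`G_i ~ N(μ_i, σ_i²)` (`i = 1, …, m`) are jointly independent, then
`E[max(0, c − X) · ∏_i 1{G_i ≤ 0}]
  = ((c − μ₀)Φ((c − μ₀)/σ₀) + σ₀ φ((c − μ₀)/σ₀)) · ∏_i Φ(−μ_i/σ_i)`. -/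
theorem constrained_expected_improvement_closed_form
    {Ω : Type*} [MeasurableSpace Ω] (P : Measure Ω) [IsProbabilityMeasure P]
    (m : ℕ) (c μ₀ σ₀ : ℝ) (hσ₀ : 0 < σ₀) (μ : Fin m → ℝ) (σ : Fin m → ℝ) (hσ : ∀ i, 0 < σ i)
    (X : Ω → ℝ) (G : Fin m → Ω → ℝ)
    (hIndep : iIndepFun (Fin.cons X G : Fin (m + 1) → Ω → ℝ) P)
    (hX : P.map X = gaussianReal μ₀ ⟨σ₀ ^ 2, sq_nonneg σ₀⟩)
    (hG : ∀ i, P.map (G i) = gaussianReal (μ i) ⟨(σ i) ^ 2, sq_nonneg (σ i)⟩) :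
    ∫ ω, max 0 (c - X ω) * ∏ i, (if G i ω ≤ 0 then (1 : ℝ) else 0) ∂P =
      ((c - μ₀) * stdGaussianCDF ((c - μ₀) / σ₀) + σ₀ * stdGaussianPDF ((c - μ₀) / σ₀)) *
        ∏ i, stdGaussianCDF (-(μ i) / σ i) :=
  constrained_expected_improvement_closed_form_general P m c μ₀ σ₀ hσ₀ μ σ hσ X G hIndep hX hG
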